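/- Let ϑ be a real number with sin(2ϑ) ≠ 0 (i.e., ϑ is not a multiple of π/2) and let p be a real number with p > 2. Then the series ∑_{n=1}^{∞} (2n+1) · | (∑_{k=0}^{n} (2k)! (2n−2k)! binomial(n,k)² exp(4ikϑ)) / (∑_{k=0}^{n} (2k)! (2n−2k)! binomial(n,k)²) |^{2p} converges. -/

import Mathlib

/-!
Since `(2k)! (2n-2k)! C(n,k)² = n!² C(2k,k) C(2n-2k,n-k)`, the ratio `S_n(ϑ) / S_n(0)` is the
weighted mean `∑ w_k z^k / ∑ w_k` with `z = e^{4iϑ}` and `w_k = a_k a_{n-k}`, where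
`a_k = C(2k,k) / 4^k`. The sequence `a` is decreasing and log-convex, so `w` decreases up to
`n/2` and increases afterwards, with `w_0 = w_n = a_n`. Abel summation against the geometric
partial sums, which are bounded by `1 / |sin 2ϑ|` as `|z - 1| = 2 |sin 2ϑ|`, gives
`|∑ w_k z^k| ≤ 3 a_n / |sin 2ϑ|`, while `∑ w_k ≥ (n+1) a_n²`. Together with the Wallis-type
bound `(4n+1) a_n² ≥ 1` this yields `|S_n(ϑ) / S_n(0)|² = O(1/n)`, so the `n`-th term of the
series is `O(n^{1-p})`, which is summable for `p > 2`.
-/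

/-- `S_n(ϑ) = ∑_{k=0}^{n} (2k)! (2n−2k)! C(n,k)² e^{4ikϑ}`. -/
noncomputable def Sseq (n : ℕ) (θ : ℝ) : ℂ :=
  ∑ k ∈ Finset.range (n + 1),
    ((2 * k).factorial : ℂ) * ((2 * (n - k)).factorial : ℂ) * ((n.choose k : ℂ)) ^ 2 *
      Complex.exp (4 * k * θ * Complex.I)

open Finset
open scoped Nat

theorem sum_range_abs_sub_le_of_antitone_monotone (f : ℕ → ℝ) {h n : ℕ} (hhn : h ≤ n)
    (hdec : ∀ i < h, f (i + 1) ≤ f i) (hinc : ∀ i ∈ Ico h n, f i ≤ f (i + 1))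
    (hfh : 0 ≤ f h) :
    ∑ i ∈ range n, |f (i + 1) - f i| ≤ f 0 + f n := by
  have hleft : ∑ i ∈ range h, |f (i + 1) - f i| = f 0 - f h := by
    rw [← sum_range_sub']
    exact sum_congr rfl fun i hi => by
      rw [abs_of_nonpos (sub_nonpos.2 (hdec i (mem_range.1 hi))), neg_sub]
  have hright : ∑ i ∈ Ico h n, |f (i + 1) - f i| = f n - f h := by
    rw [← sum_Ico_sub _ hhn]
    exact sum_congr rfl fun i hi => abs_of_nonneg (sub_nonneg.2 (hinc i hi))
  rw [← sum_range_add_sum_Ico _ hhn, hleft, hright]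
  linarith

theorem norm_sum_range_succ_smul_le {E : Type*} [SeminormedAddCommGroup E]
    [NormedSpace ℝ E] (f : ℕ → ℝ) (g : ℕ → E) (n : ℕ) {M : ℝ}
    (hM : ∀ m, ‖∑ i ∈ range m, g i‖ ≤ M) :
    ‖∑ i ∈ range (n + 1), f i • g i‖ ≤
      (|f n| + ∑ i ∈ range n, |f (i + 1) - f i|) * M := by
  rw [sum_range_by_parts, Nat.add_sub_cancel, add_mul, sum_mul]
  refine (norm_sub_le _ _).trans
    (add_le_add ?_ ((norm_sum_le _ _).trans (sum_le_sum fun i _ => ?_))) <;>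
  · rw [norm_smul, Real.norm_eq_abs]
    exact mul_le_mul_of_nonneg_left (hM _) (abs_nonneg _)

theorem norm_geom_sum_le_of_norm_eq_one {K : Type*} [NormedDivisionRing K] {z : K}
    (hz : ‖z‖ = 1) (hz1 : z ≠ 1) (m : ℕ) :
    ‖∑ i ∈ range m, z ^ i‖ ≤ 2 / ‖z - 1‖ := by
  rw [geom_sum_eq hz1, norm_div]
  gcongr
  calc ‖z ^ m - 1‖ ≤ ‖z ^ m‖ + ‖(1 : K)‖ := norm_sub_le _ _
    _ = 2 := by rw [norm_pow, hz, one_pow, norm_one]; norm_num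

noncomputable def centralBinomScaled (n : ℕ) : ℝ := n.centralBinom / 4 ^ n

theorem centralBinomScaled_pos (n : ℕ) : 0 < centralBinomScaled n := by
  have := Nat.centralBinom_pos n
  unfold centralBinomScaled
  positivity

@[simp] theorem centralBinomScaled_zero : centralBinomScaled 0 = 1 := by simp [centralBinomScaled]

theorem centralBinomScaled_succ (n : ℕ) :
    centralBinomScaled (n + 1) = centralBinomScaled n * ((2 * n + 1) / (2 * n + 2)) := by
  have h : ((n : ℝ) + 1) * (n + 1).centralBinom = 2 * (2 * n + 1) * n.centralBinom := by
    exact_mod_cast Nat.succ_mul_centralBinom_succ n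
  unfold centralBinomScaled
  rw [show (2 : ℝ) * n + 2 = 2 * (n + 1) by ring, pow_succ]
  field_simp
  linear_combination 2 * h

theorem centralBinomScaled_antitone : Antitone centralBinomScaled :=
  antitone_nat_of_succ_le fun n => by
    rw [centralBinomScaled_succ]
    exact mul_le_of_le_one_right (centralBinomScaled_pos n).le
      (div_le_one_of_le₀ (by linarith) (by positivity))

theorem one_le_mul_centralBinomScaled_sq (n : ℕ) :
    1 ≤ (4 * n + 1) * centralBinomScaled n ^ 2 := by
  induction n with
  | zero => simp
  | succ n ih =>
    have hcoef : (4 * (n : ℝ) + 1) * (2 * n + 2) ^ 2 ≤ (4 * n + 5) * (2 * n + 1) ^ 2 := by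
      nlinarith
    rw [centralBinomScaled_succ, mul_pow, div_pow]
    push_cast
    calc (1 : ℝ) ≤ (4 * n + 1) * centralBinomScaled n ^ 2 := ih
      _ ≤ (4 * n + 5) * (2 * n + 1) ^ 2 / (2 * n + 2) ^ 2 * centralBinomScaled n ^ 2 := by
        gcongr
        rw [le_div_iff₀ (by positivity)]
        exact hcoef
      _ = _ := by ring

theorem centralBinomScaled_succ_mul_le_mul_succ {k m : ℕ} (hkm : k ≤ m) :
    centralBinomScaled (k + 1) * centralBinomScaled m ≤
      centralBinomScaled k * centralBinomScaled (m + 1) := by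
  have hratio : ((2 * k + 1) / (2 * k + 2) : ℝ) ≤ (2 * m + 1) / (2 * m + 2) := by
    rw [div_le_div_iff₀ (by positivity) (by positivity)]
    have : (k : ℝ) ≤ m := by exact_mod_cast hkm
    nlinarith
  rw [centralBinomScaled_succ, centralBinomScaled_succ]
  have := mul_pos (centralBinomScaled_pos k) (centralBinomScaled_pos m)
  calc _ = centralBinomScaled k * centralBinomScaled m * ((2 * k + 1) / (2 * k + 2)) := by ring
    _ ≤ centralBinomScaled k * centralBinomScaled m * ((2 * m + 1) / (2 * m + 2)) := by gcongr
    _ = _ := by ring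

noncomputable def centralBinomWeight (n k : ℕ) : ℝ :=
  centralBinomScaled k * centralBinomScaled (n - k)

theorem centralBinomWeight_pos (n k : ℕ) : 0 < centralBinomWeight n k :=
  mul_pos (centralBinomScaled_pos _) (centralBinomScaled_pos _)

@[simp] theorem centralBinomWeight_zero (n : ℕ) :
    centralBinomWeight n 0 = centralBinomScaled n := by
  simp [centralBinomWeight]

@[simp] theorem centralBinomWeight_self (n : ℕ) :
    centralBinomWeight n n = centralBinomScaled n := by
  simp [centralBinomWeight]

theorem centralBinomWeight_succ_le {n k : ℕ} (h : 2 * k + 1 ≤ n) :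
    centralBinomWeight n (k + 1) ≤ centralBinomWeight n k := by
  obtain ⟨m, rfl⟩ := Nat.exists_eq_add_of_le h
  unfold centralBinomWeight
  rw [show 2 * k + 1 + m - (k + 1) = k + m by omega, show 2 * k + 1 + m - k = k + m + 1 by omega]
  exact centralBinomScaled_succ_mul_le_mul_succ (Nat.le_add_right k m)

theorem centralBinomWeight_le_succ {n k : ℕ} (h : n ≤ 2 * k + 1) (hk : k < n) :
    centralBinomWeight n k ≤ centralBinomWeight n (k + 1) := by
  obtain ⟨m, rfl⟩ := Nat.exists_eq_add_of_lt hk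
  unfold centralBinomWeight
  rw [show k + m + 1 - k = m + 1 by omega, show k + m + 1 - (k + 1) = m by omega, mul_comm,
    mul_comm (centralBinomScaled (k + 1))]
  exact centralBinomScaled_succ_mul_le_mul_succ (by omega)

theorem centralBinomScaled_sq_le_centralBinomWeight {n k : ℕ} (hk : k ≤ n) :
    centralBinomScaled n ^ 2 ≤ centralBinomWeight n k := by
  rw [sq]
  exact mul_le_mul (centralBinomScaled_antitone hk) (centralBinomScaled_antitone (Nat.sub_le n k))
    (centralBinomScaled_pos n).le (centralBinomScaled_pos k).le

theorem sum_abs_centralBinomWeight_sub_le (n : ℕ) :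
    ∑ i ∈ range n, |centralBinomWeight n (i + 1) - centralBinomWeight n i| ≤
      2 * centralBinomScaled n := by
  have := sum_range_abs_sub_le_of_antitone_monotone (centralBinomWeight n)
    (Nat.div_le_self n 2) (fun i hi => centralBinomWeight_succ_le (by omega))
    (fun i hi => centralBinomWeight_le_succ (by rw [mem_Ico] at hi; omega) (mem_Ico.1 hi).2)
    (centralBinomWeight_pos n _).le
  simpa [two_mul] using this

theorem norm_sum_centralBinomWeight_smul_le {E : Type*} [SeminormedAddCommGroup E]
    [NormedSpace ℝ E] (g : ℕ → E) (n : ℕ) {M : ℝ}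
    (hM : ∀ m, ‖∑ i ∈ range m, g i‖ ≤ M) :
    ‖∑ k ∈ range (n + 1), centralBinomWeight n k • g k‖ ≤ 3 * centralBinomScaled n * M := by
  have hM0 : 0 ≤ M := (norm_nonneg _).trans (hM 0)
  calc _ ≤ (|centralBinomWeight n n| +
        ∑ i ∈ range n, |centralBinomWeight n (i + 1) - centralBinomWeight n i|) * M :=
        norm_sum_range_succ_smul_le _ g n hM
    _ ≤ (centralBinomScaled n + 2 * centralBinomScaled n) * M := by
        rw [centralBinomWeight_self, abs_of_pos (centralBinomScaled_pos n)]
        gcongr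
        exact sum_abs_centralBinomWeight_sub_le n
    _ = _ := by ring

theorem Nat.factorial_mul_factorial_mul_choose_sq {n k : ℕ} (hk : k ≤ n) :
    (2 * k)! * (2 * (n - k))! * n.choose k ^ 2 =
      n ! ^ 2 * (k.centralBinom * (n - k).centralBinom) := by
  have hk2 := Nat.choose_mul_factorial_mul_factorial (show k ≤ 2 * k by omega)
  have hnk2 := Nat.choose_mul_factorial_mul_factorial (show n - k ≤ 2 * (n - k) by omega)
  have hn := Nat.choose_mul_factorial_mul_factorial hk
  rw [show 2 * k - k = k by omega] at hk2
  rw [show 2 * (n - k) - (n - k) = n - k by omega] at hnk2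
  rw [Nat.centralBinom_eq_two_mul_choose, Nat.centralBinom_eq_two_mul_choose, ← hk2, ← hnk2,
    ← hn]
  ring

theorem Sseq_eq_mul_sum (n : ℕ) (θ : ℝ) :
    Sseq n θ = ((n ! : ℂ) ^ 2 * 4 ^ n) *
      ∑ k ∈ range (n + 1), centralBinomWeight n k • Complex.exp (4 * θ * Complex.I) ^ k := by
  unfold Sseq
  rw [mul_sum]
  refine sum_congr rfl fun k hk => ?_
  have hkn : k ≤ n := Nat.lt_succ_iff.1 (mem_range.1 hk)
  have hcoef : ((2 * k)! : ℂ) * ((2 * (n - k))! : ℂ) * (n.choose k : ℂ) ^ 2 =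
      (n ! : ℂ) ^ 2 * 4 ^ n * (centralBinomWeight n k : ℂ) := by
    have h4 : (4 : ℂ) ^ n = 4 ^ k * 4 ^ (n - k) := by rw [← pow_add, Nat.add_sub_cancel' hkn]
    have hnat : ((2 * k)! : ℂ) * ((2 * (n - k))! : ℂ) * (n.choose k : ℂ) ^ 2 =
        (n ! : ℂ) ^ 2 * ((k.centralBinom : ℂ) * ((n - k).centralBinom : ℂ)) := by
      exact_mod_cast Nat.factorial_mul_factorial_mul_choose_sq hkn
    rw [hnat, h4, centralBinomWeight, centralBinomScaled, centralBinomScaled]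
    push_cast
    field_simp
  rw [hcoef, Complex.real_smul, ← Complex.exp_nat_mul]
  ring_nf

theorem Sseq_div_Sseq_zero (n : ℕ) (θ : ℝ) :
    Sseq n θ / Sseq n 0 =
      (∑ k ∈ range (n + 1), centralBinomWeight n k • Complex.exp (4 * θ * Complex.I) ^ k) /
        ((∑ k ∈ range (n + 1), centralBinomWeight n k : ℝ) : ℂ) := by
  have hK : (n ! : ℂ) ^ 2 * 4 ^ n ≠ 0 := by
    have : (n ! : ℂ) ≠ 0 := Nat.cast_ne_zero.2 n.factorial_ne_zero
    exact mul_ne_zero (pow_ne_zero _ this) (pow_ne_zero _ (by norm_num))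
  rw [Sseq_eq_mul_sum, Sseq_eq_mul_sum n 0, mul_div_mul_left _ _ hK]
  simp [Complex.real_smul]

theorem norm_exp_four_mul_I_sub_one (θ : ℝ) :
    ‖Complex.exp (4 * θ * Complex.I) - 1‖ = 2 * |Real.sin (2 * θ)| := by
  have := Complex.norm_exp_I_mul_ofReal_sub_one (4 * θ)
  rw [show 4 * θ / 2 = 2 * θ by ring, norm_mul, Real.norm_eq_abs, Real.norm_eq_abs,
    abs_two] at this
  rw [← this]
  push_cast
  ring_nf

theorem norm_Sseq_div_Sseq_zero_le {θ : ℝ} (hθ : Real.sin (2 * θ) ≠ 0) (n : ℕ) :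
    ‖Sseq n θ / Sseq n 0‖ ≤ 3 / (|Real.sin (2 * θ)| * ((n + 1) * centralBinomScaled n)) := by
  set z := Complex.exp (4 * θ * Complex.I)
  have hs : 0 < |Real.sin (2 * θ)| := abs_pos.2 hθ
  have hz : ‖z‖ = 1 := by simp [z, Complex.norm_exp]
  have hz1 : z ≠ 1 := by
    intro h
    have := norm_exp_four_mul_I_sub_one θ
    rw [← h, sub_self, norm_zero] at this
    linarith
  have hgeom : ∀ m, ‖∑ i ∈ range m, z ^ i‖ ≤ 1 / |Real.sin (2 * θ)| := fun m => by
    refine (norm_geom_sum_le_of_norm_eq_one hz hz1 m).trans_eq ?_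
    rw [norm_exp_four_mul_I_sub_one]
    field_simp
  have hnum := norm_sum_centralBinomWeight_smul_le (fun i => z ^ i) n hgeom
  have hden : (n + 1) * centralBinomScaled n ^ 2 ≤
      ∑ k ∈ range (n + 1), centralBinomWeight n k := by
    simpa using card_nsmul_le_sum (range (n + 1)) (centralBinomWeight n) _ fun k hk =>
      centralBinomScaled_sq_le_centralBinomWeight (Nat.lt_succ_iff.1 (mem_range.1 hk))
  have hc := centralBinomScaled_pos n
  rw [Sseq_div_Sseq_zero, norm_div, Complex.norm_real,
    Real.norm_of_nonneg (hden.trans' (by positivity))]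
  calc _ ≤ 3 * centralBinomScaled n * (1 / |Real.sin (2 * θ)|) /
        ((n + 1) * centralBinomScaled n ^ 2) := by gcongr
    _ = _ := by field_simp

theorem norm_Sseq_div_Sseq_zero_sq_le {θ : ℝ} (hθ : Real.sin (2 * θ) ≠ 0) (n : ℕ) :
    ‖Sseq n θ / Sseq n 0‖ ^ 2 ≤ (6 / |Real.sin (2 * θ)|) ^ 2 / (n + 1) := by
  have hs : 0 < |Real.sin (2 * θ)| := abs_pos.2 hθ
  have hc := centralBinomScaled_pos n
  have hwallis := one_le_mul_centralBinomScaled_sq n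
  calc _ ≤ (3 / (|Real.sin (2 * θ)| * ((n + 1) * centralBinomScaled n))) ^ 2 := by
        gcongr
        exact norm_Sseq_div_Sseq_zero_le hθ n
    _ ≤ _ := by
        rw [div_pow, div_pow, div_div, div_le_div_iff₀ (by positivity) (by positivity)]
        nlinarith

theorem summable_mul_rpow_of_sq_le {x : ℕ → ℝ} {C p : ℝ} (hp : 2 < p) (hx0 : ∀ n, 0 ≤ x n)
    (hx : ∀ n : ℕ, x n ^ 2 ≤ C / (n + 1)) :
    Summable fun n : ℕ => (2 * ((n : ℝ) + 1) + 1) * x n ^ (2 * p) := by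
  have hC : 0 ≤ C := by simpa using (sq_nonneg (x 0)).trans (hx 0)
  have hbound (n : ℕ) :
      (2 * ((n : ℝ) + 1) + 1) * x n ^ (2 * p) ≤ 3 * C ^ p * ((n : ℝ) + 1) ^ (1 - p) := by
    have hn : (0 : ℝ) < n + 1 := by positivity
    calc (2 * ((n : ℝ) + 1) + 1) * x n ^ (2 * p)
        = (2 * ((n : ℝ) + 1) + 1) * (x n ^ 2) ^ p := by
          rw [Real.rpow_mul (hx0 n), Real.rpow_two]
      _ ≤ (3 * ((n : ℝ) + 1)) * (C / (n + 1)) ^ p := by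
          gcongr
          · linarith
          · exact hx n
      _ = 3 * C ^ p * ((n : ℝ) + 1) ^ (1 - p) := by
          rw [Real.div_rpow hC hn.le, Real.rpow_sub hn, Real.rpow_one]
          ring
  have hpseries : Summable fun n : ℕ => ((n : ℝ) + 1) ^ (1 - p) := by
    simpa using (summable_nat_add_iff 1).2
      (Real.summable_nat_rpow.2 (by linarith : 1 - p < -1))
  refine Summable.of_nonneg_of_le (fun n => ?_) hbound (hpseries.mul_left _)
  exact mul_nonneg (by positivity) (Real.rpow_nonneg (hx0 n) _)

/-- If `sin (2ϑ) ≠ 0` and `p > 2` is real, then the series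
`∑_{n≥1} (2n+1) |S_n(ϑ)/S_n(0)|^{2p}` converges. -/
theorem summable_ratio_rpow (θ : ℝ) (hθ : Real.sin (2 * θ) ≠ 0) (p : ℝ) (hp : 2 < p) :
    Summable (fun n : ℕ =>
      (2 * ((n : ℝ) + 1) + 1) *
        ‖Sseq (n + 1) θ / Sseq (n + 1) 0‖ ^ (2 * p)) := by
  refine summable_mul_rpow_of_sq_le (C := (6 / |Real.sin (2 * θ)|) ^ 2) hp
    (fun n => norm_nonneg _) fun n => ?_
  calc _ ≤ (6 / |Real.sin (2 * θ)|) ^ 2 / ((n + 1 : ℕ) + 1) :=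
        norm_Sseq_div_Sseq_zero_sq_le hθ _
    _ ≤ (6 / |Real.sin (2 * θ)|) ^ 2 / (n + 1) := by
        gcongr
        linarith
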